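/- Let a satisfy hypothesis (A.0) and let b ≥ 0 be measurable satisfying hypothesis (B.0). Let u be a measurable function on (0,∞) with ∫₀^∞ x·(1+a(x))·|u(x)| dx < ∞. Then ∫₀^∞ x·𝟙_{u(x)>0}·F(u)(x) dx ≤ 0, where 𝟙_{u(x)>0} denotes the indicator function of the set {x : u(x) > 0}. -/

import Mathlib

open MeasureTheory Set Real
open scoped ENNReal

/-- The fragmentation operator `F(φ)(x) = −a(x)φ(x) + ∫_x^∞ a(y)b(x,y)φ(y) dy`. -/
noncomputable def fragOp (a : ℝ → ℝ) (b : ℝ → ℝ → ℝ) (φ : ℝ → ℝ) (x : ℝ) : ℝ :=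
  -(a x * φ x) + ∫ y in Ioi x, a y * b x y * φ y

/-- under (A.0) and (B.0), for every measurable `u` with
`∫₀^∞ x(1+a(x))|u(x)| dx < ∞`, one has `∫₀^∞ x·𝟙_{u(x)>0}·F(u)(x) dx ≤ 0`. -/
theorem frag_sign_plus_dissipative (a : ℝ → ℝ) (b : ℝ → ℝ → ℝ) (u : ℝ → ℝ)
    (ha : Measurable a) (ha0 : ∀ x ∈ Ioi (0 : ℝ), 0 ≤ a x)
    (haloc : ∀ R : ℝ, 0 < R → ∃ C : ℝ, ∀ x ∈ Ioc (0 : ℝ) R, a x ≤ C)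
    (hb : Measurable (Function.uncurry b))
    (hbnn : ∀ x y : ℝ, 0 < x → 0 < y → 0 ≤ b x y)
    (hB0int : ∀ y : ℝ, 0 < y → IntegrableOn (fun x => x * b x y) (Ioo 0 y))
    (hB0 : ∀ y : ℝ, 0 < y → (∫ x in Ioo 0 y, x * b x y) = y)
    (hum : Measurable u)
    (huint : IntegrableOn (fun x => x * (1 + a x) * |u x|) (Ioi 0)) :
    (∫ x in Ioi (0 : ℝ), x * (if 0 < u x then (1 : ℝ) else 0) * fragOp a b u x) ≤ 0 := by
  classical
  -- positive part of u
  set up : ℝ → ℝ := fun x => max (u x) 0 with hup_def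
  have hupm : Measurable up := hum.max measurable_const
  have hup_nonneg : ∀ x, 0 ≤ up x := fun x => le_max_right _ _
  have hup_le_abs : ∀ x, up x ≤ |u x| := fun x => max_le (le_abs_self _) (abs_nonneg _)
  -- the sign indicator
  set χ : ℝ → ℝ := fun x => if 0 < u x then (1 : ℝ) else 0 with hχ_def
  have hχm : Measurable χ :=
    Measurable.ite (measurableSet_lt measurable_const hum) measurable_const measurable_const
  have hχu : ∀ x, χ x * u x = up x := by
    intro x
    simp only [hχ_def, hup_def]
    by_cases h : 0 < u x
    · rw [if_pos h, one_mul, max_eq_left h.le]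
    · rw [if_neg h, zero_mul, max_eq_right (le_of_not_gt h)]
  -- the kernels on the region 0 < x < y
  set f : ℝ × ℝ → ℝ :=
    fun p => if 0 < p.1 ∧ p.1 < p.2 then p.1 * (a p.2 * b p.1 p.2 * u p.2) else 0 with hf_def
  set g : ℝ × ℝ → ℝ :=
    fun p => if 0 < p.1 ∧ p.1 < p.2 then p.1 * (a p.2 * b p.1 p.2 * up p.2) else 0 with hg_def
  have hregion : MeasurableSet {p : ℝ × ℝ | 0 < p.1 ∧ p.1 < p.2} :=
    (measurableSet_lt measurable_const measurable_fst).inter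
      (measurableSet_lt measurable_fst measurable_snd)
  have hbm : Measurable fun p : ℝ × ℝ => b p.1 p.2 := hb
  have hfm : Measurable f :=
    Measurable.ite hregion
      (measurable_fst.mul (((ha.comp measurable_snd).mul hbm).mul (hum.comp measurable_snd)))
      measurable_const
  have hgm : Measurable g :=
    Measurable.ite hregion
      (measurable_fst.mul (((ha.comp measurable_snd).mul hbm).mul (hupm.comp measurable_snd)))
      measurable_const
  -- x-sections of f are integrable
  have hsec : ∀ y : ℝ, Integrable (fun x => f (x, y)) volume := by
    intro y
    rcases le_or_gt y 0 with hy | hy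
    · have he : (fun x => f (x, y)) = fun _ => 0 := by
        funext x
        simp only [hf_def]
        rw [if_neg]
        rintro ⟨h1, h2⟩; linarith
      rw [he]; exact integrable_zero _ _ _
    · have he : (fun x => f (x, y)) = (Ioo 0 y).indicator (fun x => (x * b x y) * (a y * u y)) := by
        funext x
        by_cases hx : 0 < x ∧ x < y
        · simp only [hf_def]
          rw [if_pos hx, indicator_of_mem (mem_Ioo.2 hx)]
          ring
        · simp only [hf_def]
          rw [if_neg hx, indicator_of_notMem (fun h => hx (mem_Ioo.1 h))]
      rw [he]
      exact IntegrableOn.integrable_indicator ((hB0int y hy).mul_const _) measurableSet_Ioo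
  -- norm integrals of x-sections of f
  have hnorm_eq : ∀ y : ℝ, (∫ x, ‖f (x, y)‖) = if 0 < y then y * (a y * |u y|) else 0 := by
    intro y
    rcases le_or_gt y 0 with hy | hy
    · rw [if_neg (not_lt.2 hy)]
      have he : (fun x => ‖f (x, y)‖) = fun _ => 0 := by
        funext x
        simp only [hf_def]
        rw [if_neg]
        · simp
        · rintro ⟨h1, h2⟩; linarith
      rw [he, integral_zero]
    · rw [if_pos hy]
      have ha' : 0 ≤ a y := ha0 y (mem_Ioi.2 hy)
      have he : (fun x => ‖f (x, y)‖)
          = (Ioo 0 y).indicator (fun x => (x * b x y) * (a y * |u y|)) := by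
        funext x
        by_cases hx : 0 < x ∧ x < y
        · have hb' : 0 ≤ b x y := hbnn x y hx.1 hy
          simp only [hf_def]
          rw [if_pos hx, indicator_of_mem (mem_Ioo.2 hx), Real.norm_eq_abs,
            abs_mul, abs_mul, abs_mul, abs_of_nonneg hx.1.le, abs_of_nonneg ha',
            abs_of_nonneg hb']
          ring
        · simp only [hf_def]
          rw [if_neg hx, indicator_of_notMem (fun h => hx (mem_Ioo.1 h))]
          simp
      rw [he, integral_indicator measurableSet_Ioo, integral_mul_const, hB0 y hy]
  -- the dominating function is integrable
  have hmaj : IntegrableOn (fun y => y * (a y * |u y|)) (Ioi 0) := by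
    apply Integrable.mono huint ((measurable_id.mul (ha.mul hum.abs)).aestronglyMeasurable.restrict)
    rw [ae_restrict_iff' measurableSet_Ioi]
    filter_upwards with y hy
    simp only [Pi.mul_apply, id_eq]
    have hy' : (0 : ℝ) < y := hy
    have hay : 0 ≤ a y := ha0 y hy
    have h1 : 0 ≤ y * (a y * |u y|) := by positivity
    have h2 : 0 ≤ y * (1 + a y) * |u y| := by positivity
    rw [Real.norm_eq_abs, Real.norm_eq_abs, abs_of_nonneg h1, abs_of_nonneg h2]
    nlinarith [abs_nonneg (u y), mul_nonneg hy'.le (abs_nonneg (u y))]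
  have hfnormint : Integrable (fun y => ∫ x, ‖f (x, y)‖) volume := by
    have he : (fun y => ∫ x, ‖f (x, y)‖) = (Ioi 0).indicator (fun y => y * (a y * |u y|)) := by
      funext y
      rw [hnorm_eq y]
      by_cases hy : 0 < y
      · rw [if_pos hy, indicator_of_mem (mem_Ioi.2 hy)]
      · rw [if_neg hy, indicator_of_notMem (by simpa [mem_Ioi] using hy)]
    rw [he]
    exact hmaj.integrable_indicator measurableSet_Ioi
  -- f is integrable on the product
  have hfint : Integrable f ((volume : Measure ℝ).prod volume) :=
    (integrable_prod_iff' hfm.aestronglyMeasurable).2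
      ⟨Filter.Eventually.of_forall hsec, hfnormint⟩
  -- g is dominated by f in norm, hence integrable
  have hgint : Integrable g ((volume : Measure ℝ).prod volume) := by
    apply hfint.mono hgm.aestronglyMeasurable
    filter_upwards with p
    simp only [hf_def, hg_def]
    by_cases hp : 0 < p.1 ∧ p.1 < p.2
    · have hy' : (0 : ℝ) < p.2 := hp.1.trans hp.2
      have hb' : 0 ≤ b p.1 p.2 := hbnn p.1 p.2 hp.1 hy'
      have ha' : 0 ≤ a p.2 := ha0 p.2 (mem_Ioi.2 hy')
      rw [if_pos hp, if_pos hp, Real.norm_eq_abs, Real.norm_eq_abs,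
        abs_mul, abs_mul, abs_mul, abs_mul, abs_mul, abs_mul]
      have h1 : |up p.2| ≤ |u p.2| := by
        rw [abs_of_nonneg (hup_nonneg _)]; exact hup_le_abs _
      gcongr
    · rw [if_neg hp, if_neg hp]
  -- pointwise f ≤ g and 0 ≤ g
  have hfg : ∀ p : ℝ × ℝ, f p ≤ g p := by
    intro p
    simp only [hf_def, hg_def]
    by_cases hp : 0 < p.1 ∧ p.1 < p.2
    · have hy' : (0 : ℝ) < p.2 := hp.1.trans hp.2
      have hb' : 0 ≤ b p.1 p.2 := hbnn p.1 p.2 hp.1 hy'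
      have ha' : 0 ≤ a p.2 := ha0 p.2 (mem_Ioi.2 hy')
      rw [if_pos hp, if_pos hp]
      have : u p.2 ≤ up p.2 := le_max_left _ _
      apply mul_le_mul_of_nonneg_left _ hp.1.le
      exact mul_le_mul_of_nonneg_left this (mul_nonneg ha' hb')
    · rw [if_neg hp, if_neg hp]
  have hg_nonneg : ∀ p : ℝ × ℝ, 0 ≤ g p := by
    intro p
    simp only [hg_def]
    by_cases hp : 0 < p.1 ∧ p.1 < p.2
    · have hy' : (0 : ℝ) < p.2 := hp.1.trans hp.2
      rw [if_pos hp]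
      have hb' : 0 ≤ b p.1 p.2 := hbnn p.1 p.2 hp.1 hy'
      have ha' : 0 ≤ a p.2 := ha0 p.2 (mem_Ioi.2 hy')
      have hu' : 0 ≤ up p.2 := hup_nonneg _
      exact mul_nonneg hp.1.le (mul_nonneg (mul_nonneg ha' hb') hu')
    · rw [if_neg hp]
  -- link between y-integrals of f and the inner integral of fragOp
  have hxint : ∀ x : ℝ, 0 < x → (∫ y, f (x, y)) = x * ∫ y in Ioi x, a y * b x y * u y := by
    intro x hx
    have he : (fun y => f (x, y)) = (Ioi x).indicator (fun y => x * (a y * b x y * u y)) := by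
      funext y
      by_cases hy : x < y
      · simp only [hf_def]
        rw [if_pos ⟨hx, hy⟩, indicator_of_mem (mem_Ioi.2 hy)]
      · simp only [hf_def]
        rw [if_neg (fun h => hy h.2), indicator_of_notMem (by simpa [mem_Ioi] using hy)]
    rw [he, integral_indicator measurableSet_Ioi, integral_const_mul]
  -- x-integrals of g
  have hgy : ∀ y : ℝ, (∫ x, g (x, y)) = if 0 < y then y * (a y * up y) else 0 := by
    intro y
    rcases le_or_gt y 0 with hy | hy
    · rw [if_neg (not_lt.2 hy)]
      have he : (fun x => g (x, y)) = fun _ => 0 := by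
        funext x
        simp only [hg_def]
        rw [if_neg]
        rintro ⟨h1, h2⟩; linarith
      rw [he, integral_zero]
    · rw [if_pos hy]
      have he : (fun x => g (x, y)) = (Ioo 0 y).indicator (fun x => (x * b x y) * (a y * up y)) := by
        funext x
        by_cases hx : 0 < x ∧ x < y
        · simp only [hg_def]
          rw [if_pos hx, indicator_of_mem (mem_Ioo.2 hx)]
          ring
        · simp only [hg_def]
          rw [if_neg hx, indicator_of_notMem (fun h => hx (mem_Ioo.1 h))]
      rw [he, integral_indicator measurableSet_Ioo, integral_mul_const, hB0 y hy]
  -- integrability of the linear term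
  have hT : IntegrableOn (fun x => x * (a x * up x)) (Ioi 0) := by
    apply Integrable.mono huint ((measurable_id.mul (ha.mul hupm)).aestronglyMeasurable.restrict)
    rw [ae_restrict_iff' measurableSet_Ioi]
    filter_upwards with x hx
    simp only [Pi.mul_apply, id_eq]
    have hx' : (0 : ℝ) < x := hx
    have hax : 0 ≤ a x := ha0 x hx
    have hux : 0 ≤ up x := hup_nonneg x
    have h1 : 0 ≤ x * (a x * up x) := by positivity
    have h2 : 0 ≤ x * (1 + a x) * |u x| := by positivity
    rw [Real.norm_eq_abs, Real.norm_eq_abs, abs_of_nonneg h1, abs_of_nonneg h2]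
    nlinarith [mul_le_mul_of_nonneg_left (hup_le_abs x) (mul_nonneg hx'.le hax),
      mul_nonneg hx'.le (abs_nonneg (u x))]
  -- integrability of the gain term
  have hP2m : AEStronglyMeasurable (fun x => χ x * ∫ y, f (x, y)) volume :=
    (hχm.mul hfm.stronglyMeasurable.integral_prod_right'.measurable).aestronglyMeasurable
  have hP2int : Integrable (fun x => χ x * ∫ y, f (x, y)) volume := by
    apply hfint.integral_norm_prod_left.mono hP2m
    filter_upwards with x
    have h1 : |χ x| ≤ 1 := by
      simp only [hχ_def]
      split <;> simp
    have h2 : |∫ y, f (x, y)| ≤ ∫ y, ‖f (x, y)‖ := by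
      simpa [Real.norm_eq_abs] using norm_integral_le_integral_norm (fun y => f (x, y))
    have h3 : (0 : ℝ) ≤ ∫ y, ‖f (x, y)‖ := integral_nonneg fun y => norm_nonneg _
    rw [Real.norm_eq_abs, Real.norm_eq_abs, abs_mul, abs_of_nonneg h3]
    calc |χ x| * |∫ y, f (x, y)| ≤ 1 * (∫ y, ‖f (x, y)‖) :=
          mul_le_mul h1 h2 (abs_nonneg _) zero_le_one
      _ = ∫ y, ‖f (x, y)‖ := one_mul _
  have hGint : Integrable (fun x => ∫ y, g (x, y)) volume := hgint.integral_prod_left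
  have hG_nonneg : ∀ x : ℝ, 0 ≤ ∫ y, g (x, y) :=
    fun x => integral_nonneg fun y => hg_nonneg (x, y)
  -- a.e. pointwise bound
  have hle : ∀ᵐ x : ℝ, χ x * (∫ y, f (x, y)) ≤ ∫ y, g (x, y) := by
    filter_upwards [hfint.prod_right_ae, hgint.prod_right_ae] with x hfx hgx
    have hint : (∫ y, f (x, y)) ≤ ∫ y, g (x, y) :=
      integral_mono hfx hgx fun y => hfg (x, y)
    by_cases hx : 0 < u x
    · simp only [hχ_def, if_pos hx, one_mul]
      exact hint
    · simp only [hχ_def, if_neg hx, zero_mul]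
      exact hG_nonneg x
  -- split the integrand
  have hsplit : ∀ x ∈ Ioi (0 : ℝ), x * χ x * fragOp a b u x
      = -(x * (a x * up x)) + χ x * ∫ y, f (x, y) := by
    intro x hx
    have hx' : (0 : ℝ) < x := hx
    simp only [fragOp]
    rw [hxint x hx', ← hχu x]
    ring
  have hLHS : (∫ x in Ioi (0 : ℝ), x * χ x * fragOp a b u x)
      = (∫ x in Ioi (0 : ℝ), -(x * (a x * up x))) + ∫ x in Ioi (0 : ℝ), χ x * ∫ y, f (x, y) := by
    have hadd : (∫ x in Ioi (0 : ℝ), (-(x * (a x * up x)) + χ x * ∫ y, f (x, y)))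
        = (∫ x in Ioi (0 : ℝ), -(x * (a x * up x)))
          + ∫ x in Ioi (0 : ℝ), χ x * ∫ y, f (x, y) :=
      integral_add hT.neg' hP2int.integrableOn
    exact (setIntegral_congr_fun measurableSet_Ioi hsplit).trans hadd
  have h1 : (∫ x in Ioi (0 : ℝ), -(x * (a x * up x)))
      = -(∫ x in Ioi (0 : ℝ), x * (a x * up x)) := integral_neg _
  have h2 : (∫ x in Ioi (0 : ℝ), χ x * ∫ y, f (x, y)) ≤ ∫ x in Ioi (0 : ℝ), ∫ y, g (x, y) :=
    integral_mono_ae hP2int.integrableOn hGint.integrableOn (ae_restrict_of_ae hle)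
  have h3 : (∫ x in Ioi (0 : ℝ), ∫ y, g (x, y)) = ∫ x : ℝ, ∫ y, g (x, y) := by
    apply setIntegral_eq_integral_of_forall_compl_eq_zero
    intro x hx
    have hx' : ¬ 0 < x := by simpa [mem_Ioi] using hx
    have he : (fun y => g (x, y)) = fun _ => 0 := by
      funext y
      simp only [hg_def]
      rw [if_neg (fun h => hx' h.1)]
    rw [he, integral_zero]
  have h4 : (∫ x : ℝ, ∫ y, g (x, y)) = ∫ y : ℝ, ∫ x, g (x, y) :=
    integral_integral_swap (f := fun x y => g (x, y)) hgint
  have h5 : (∫ y : ℝ, ∫ x, g (x, y)) = ∫ y in Ioi (0 : ℝ), y * (a y * up y) := by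
    have he : (fun y : ℝ => ∫ x, g (x, y)) = (Ioi 0).indicator (fun y => y * (a y * up y)) := by
      funext y
      rw [hgy y]
      by_cases hy : 0 < y
      · rw [if_pos hy, indicator_of_mem (mem_Ioi.2 hy)]
      · rw [if_neg hy, indicator_of_notMem (by simpa [mem_Ioi] using hy)]
    rw [he, integral_indicator measurableSet_Ioi]
  have hfinal := h2.trans (le_of_eq (h3.trans (h4.trans h5)))
  rw [hLHS, h1]
  linarith [hfinal]
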